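/- Let ε ∈ ℝ, Δτ > 0, and assume the linear instability condition: ε < 0 or ε > 2/(π(Δτ)²). Then for every θ ∈ ℝ with cos θ ≠ 0: the matrix Ĵ(θ) has determinant 1, the coefficients satisfy A(θ) > 0, B(θ) > 0, C(θ) > 0, and the discriminant satisfies B(θ)² − 4A(θ)C(θ) ≥ 0. -/
import Mathlib


/-- The Jacobian `Ĵ(θ)` of the map `T̂_{ε,Δτ}`. -/
noncomputable def Jhat (ε Δτ θ : ℝ) : Matrix (Fin 2) (Fin 2) ℝ :=
  !![1 - Real.pi * ε * Δτ ^ 2 / Real.cos θ ^ 2,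
       -(2 * Real.pi * ε * Δτ) / Real.cos θ ^ 2;
     Δτ * (1 - Real.pi * ε * Δτ ^ 2 / (2 * Real.cos θ ^ 2)),
       1 - Real.pi * ε * Δτ ^ 2 / Real.cos θ ^ 2]

/-- The coefficient `A(θ)`. -/
noncomputable def Acoef (ε Δτ θ : ℝ) : ℝ :=
  (1 - Real.pi * ε * Δτ ^ 2 / Real.cos θ ^ 2) ^ 2
    + Δτ ^ 2 * (1 - Real.pi * ε * Δτ ^ 2 / (2 * Real.cos θ ^ 2)) ^ 2 - 1

/-- The coefficient `B(θ)`. -/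
noncomputable def Bcoef (ε Δτ θ : ℝ) : ℝ :=
  (1 - Real.pi * ε * Δτ ^ 2 / Real.cos θ ^ 2) *
    (-(4 * Real.pi * ε * Δτ) / Real.cos θ ^ 2
      + 2 * Δτ * (1 - Real.pi * ε * Δτ ^ 2 / (2 * Real.cos θ ^ 2)))

/-- The coefficient `C(θ)`. -/
noncomputable def Ccoef (ε Δτ θ : ℝ) : ℝ :=
  4 * Real.pi ^ 2 * ε ^ 2 * Δτ ^ 2 / Real.cos θ ^ 4
    + (1 - Real.pi * ε * Δτ ^ 2 / Real.cos θ ^ 2) ^ 2 - 1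

lemma coef_aux (q Δτ : ℝ) (hΔτ : 0 < Δτ) (hs : q * Δτ < 0 ∨ q * Δτ > 2) :
    0 < (1 - q*Δτ)^2 + Δτ^2*(1 - q*Δτ/2)^2 - 1 ∧
    0 < (1 - q*Δτ) * (-4*q + 2*Δτ*(1 - q*Δτ/2)) ∧
    0 < 4*q^2 + (1 - q*Δτ)^2 - 1 ∧
    ((1 - q*Δτ) * (-4*q + 2*Δτ*(1 - q*Δτ/2)))^2
      - 4 * ((1 - q*Δτ)^2 + Δτ^2*(1 - q*Δτ/2)^2 - 1)
          * (4*q^2 + (1 - q*Δτ)^2 - 1) ≥ 0 := by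
  refine ⟨?_, ?_, ?_, ?_⟩
  · rcases hs with h | h <;> nlinarith [sq_nonneg (1 - q*Δτ/2), sq_nonneg (q*Δτ)]
  · rcases hs with h | h
    · have hq0 : q < 0 := by nlinarith
      have h1 : (0:ℝ) < 1 - q*Δτ := by nlinarith
      have h2 : (0:ℝ) < -4*q + 2*Δτ*(1 - q*Δτ/2) := by nlinarith
      exact mul_pos h1 h2
    · have hq0 : 0 < q := by nlinarith
      have h1 : 1 - q*Δτ < 0 := by nlinarith
      have h2 : -4*q + 2*Δτ*(1 - q*Δτ/2) < 0 := by nlinarith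
      exact mul_pos_of_neg_of_neg h1 h2
  · rcases hs with h | h <;> nlinarith [sq_nonneg q]
  · nlinarith [sq_nonneg (q*Δτ^2 + 4*q - 2*Δτ)]

/-- Under the linear instability condition (with `Δτ > 0`), `Ĵ(θ)` has
determinant `1`, the coefficients `A(θ), B(θ), C(θ)` are positive, and the
discriminant `B(θ)² − 4A(θ)C(θ)` is nonnegative, at every regular `θ`. -/
theorem Jhat_coefficients (ε Δτ : ℝ) (hΔτ : Δτ > 0)
    (hli : ε < 0 ∨ ε > 2 / (Real.pi * Δτ ^ 2))
    (θ : ℝ) (hθ : Real.cos θ ≠ 0) :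
    Matrix.det (Jhat ε Δτ θ) = 1 ∧
    Acoef ε Δτ θ > 0 ∧ Bcoef ε Δτ θ > 0 ∧ Ccoef ε Δτ θ > 0 ∧
    Bcoef ε Δτ θ ^ 2 - 4 * Acoef ε Δτ θ * Ccoef ε Δτ θ ≥ 0 := by
  have hc2 : (0:ℝ) < Real.cos θ ^ 2 := by positivity
  have hΔ0 : Δτ ≠ 0 := ne_of_gt hΔτ
  obtain ⟨q, hq⟩ : ∃ q : ℝ, q = Real.pi * ε * Δτ / Real.cos θ ^ 2 := ⟨_, rfl⟩
  have hA : Acoef ε Δτ θ = (1 - q*Δτ)^2 + Δτ^2*(1 - q*Δτ/2)^2 - 1 := by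
    unfold Acoef; rw [hq]; field_simp
  have hB : Bcoef ε Δτ θ = (1 - q*Δτ) * (-4*q + 2*Δτ*(1 - q*Δτ/2)) := by
    unfold Bcoef; rw [hq]; field_simp
  have hC : Ccoef ε Δτ θ = 4*q^2 + (1 - q*Δτ)^2 - 1 := by
    unfold Ccoef; rw [hq]; field_simp
  have hdet : Matrix.det (Jhat ε Δτ θ) = 1 := by
    unfold Jhat; rw [Matrix.det_fin_two_of]; field_simp; ring
  have hs : q * Δτ < 0 ∨ q * Δτ > 2 := by
    rcases hli with h | h
    · left
      have hπ := Real.pi_pos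
      have hne : Real.pi * ε * Δτ < 0 :=
        mul_neg_of_neg_of_pos (mul_neg_of_pos_of_neg hπ h) hΔτ
      have : q < 0 := hq ▸ div_neg_of_neg_of_pos hne hc2
      nlinarith
    · right
      have hπ := Real.pi_pos
      have h2 : 2 < Real.pi * ε * Δτ ^ 2 := by
        rw [gt_iff_lt, div_lt_iff₀ (by positivity)] at h
        nlinarith
      have hcle : Real.cos θ ^ 2 ≤ 1 := by
        nlinarith [Real.neg_one_le_cos θ, Real.cos_le_one θ]
      have : q * Δτ = Real.pi * ε * Δτ ^ 2 / Real.cos θ ^ 2 := by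
        rw [hq]; field_simp
      rw [this, gt_iff_lt, lt_div_iff₀ hc2]
      nlinarith
  obtain ⟨h1, h2, h3, h4⟩ := coef_aux q Δτ hΔτ hs
  exact ⟨hdet, hA ▸ h1, hB ▸ h2, hC ▸ h3, by rw [hA, hB, hC]; linarith⟩
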